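/- arXiv:0901.2136 — 3 statements merged into one kernel-verified Lean document; each statement's English description precedes it below -/
import Mathlib

section
/- In an associative superalgebra with odd elements Q₁,…,Q_N and even elements H, τ satisfying {Q_I,Q_J}=2δ_{IJ}H, [H,Q_I]=0, [H,τ]=iℏ·1, define τ'_K := [Q_K,τ] and τ''_{JK} := {Q_J,τ'_K} − {Q_K,τ'_J} (twice the antisymmetrization). Then [Q_I, τ''_{JK}] is totally antisymmetric in I,J,K: [Q_I,τ''_{JK}] = −[Q_J,τ''_{IK}] = [Q_K,τ''_{IJ}]. -/
/-- The commutator `[x,y] = x*y - y*x`. -/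
def Paper.cm {A : Type*} [Ring A] (x y : A) : A := x * y - y * x

/-- The anticommutator `{x,y} = x*y + y*x`. -/
def Paper.acm {A : Type*} [Ring A] (x y : A) : A := x * y + y * x

open Paper

section Aux
variable {A : Type*} [Ring A]

lemma Paper.cm_sub (a x y : A) : cm a (x - y) = cm a x - cm a y := by
  simp only [cm]; noncomm_ring

lemma Paper.cm_zero (a : A) : cm a (0 : A) = 0 := by simp [cm]

lemma Paper.zero_cm (a : A) : cm (0 : A) a = 0 := by simp [cm]

lemma Paper.acm_comm (a b : A) : acm a b = acm b a := by
  simp only [acm]; abel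

lemma Paper.jacobi1 (a b c : A) :
    cm a (acm b c) + cm b (acm c a) + cm c (acm a b) = 0 := by
  simp only [cm, acm]; noncomm_ring

lemma Paper.jacobi2 (a b c : A) :
    cm (acm a b) c = acm a (cm b c) + acm (cm a c) b := by
  simp only [cm, acm]; noncomm_ring

lemma Paper.jacobi3 (a b c : A) :
    cm a (cm b c) = cm (cm a b) c + cm b (cm a c) := by
  simp only [cm]; noncomm_ring

lemma Paper.cm_smul (c : ℂ) [Algebra ℂ A] (x y : A) :
    cm x (c • y) = c • cm x y := by
  simp [cm, mul_smul_comm, smul_mul_assoc, smul_sub]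

lemma Paper.smul_cm (c : ℂ) [Algebra ℂ A] (x y : A) :
    cm (c • x) y = c • cm x y := by
  simp [cm, mul_smul_comm, smul_mul_assoc, smul_sub]

lemma Paper.cm_smul_one (c : ℂ) [Algebra ℂ A] (x : A) :
    cm x (c • (1 : A)) = 0 := by
  simp [cm, mul_smul_comm, smul_mul_assoc]

lemma Paper.neg_cm (a b : A) : cm b a = - cm a b := by
  simp only [cm]; abel

end Aux

/-- with `τ'_K := [Q_K,τ]` and `τ''_{JK} := {Q_J,τ'_K} − {Q_K,τ'_J}`,
the element `[Q_I,τ''_{JK}]` is totally antisymmetric in `I,J,K`. -/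
theorem stmt2 {A : Type*} [Ring A] [Algebra ℂ A] {N : ℕ}
    (Q : Fin N → A) (H τ : A) (ℏ : ℂ)
    (hQQ : ∀ I J, acm (Q I) (Q J) = if I = J then (2 : ℂ) • H else 0)
    (hHQ : ∀ I, cm H (Q I) = 0)
    (hHτ : cm H τ = (Complex.I * ℏ) • (1 : A)) :
    ∀ I J K,
      cm (Q I) (acm (Q J) (cm (Q K) τ) - acm (Q K) (cm (Q J) τ))
        = - cm (Q J) (acm (Q I) (cm (Q K) τ) - acm (Q K) (cm (Q I) τ)) ∧
      cm (Q I) (acm (Q J) (cm (Q K) τ) - acm (Q K) (cm (Q J) τ))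
        = cm (Q K) (acm (Q I) (cm (Q J) τ) - acm (Q J) (cm (Q I) τ)) := by
  -- notation: τ' K = [Q_K, τ],  F I J K = [Q_I, {Q_J, τ'_K}]
  have hHτ' : ∀ K, cm H (cm (Q K) τ) = 0 := by
    intro K
    rw [jacobi3, hHQ, hHτ, zero_cm, cm_smul_one, add_zero]
  -- F is antisymmetric in its first two indices (graded Jacobi + [τ'_K, 2δ_{IJ}H] = 0)
  have hA : ∀ I J K, cm (Q I) (acm (Q J) (cm (Q K) τ))
      = - cm (Q J) (acm (Q I) (cm (Q K) τ)) := by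
    intro I J K
    have h := jacobi1 (Q I) (Q J) (cm (Q K) τ)
    have h2 : cm (cm (Q K) τ) (acm (Q I) (Q J)) = 0 := by
      rw [hQQ]
      by_cases hIJ : I = J
      · rw [if_pos hIJ, cm_smul, neg_cm, hHτ' K, neg_zero, smul_zero]
      · rw [if_neg hIJ, cm_zero]
    rw [acm_comm (cm (Q K) τ) (Q I), h2, add_zero] at h
    exact eq_neg_of_add_eq_zero_left h
  -- F is antisymmetric in its last two indices, since {Q_J, τ'_K} + {Q_K, τ'_J}
  -- is central (equals [{Q_J,Q_K}, τ] = 2δ_{JK}·iℏ·1)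
  have hB : ∀ I J K, cm (Q I) (acm (Q J) (cm (Q K) τ))
      = - cm (Q I) (acm (Q K) (cm (Q J) τ)) := by
    intro I J K
    have h := jacobi2 (Q J) (Q K) τ
    rw [acm_comm (cm (Q J) τ) (Q K)] at h
    -- h : cm (acm (Q J) (Q K)) τ = acm (Q J) (cm (Q K) τ) + acm (Q K) (cm (Q J) τ)
    have hc : cm (Q I) (cm (acm (Q J) (Q K)) τ) = 0 := by
      rw [hQQ]
      by_cases hJK : J = K
      · rw [if_pos hJK, smul_cm, hHτ, cm_smul, cm_smul_one]; simp
      · rw [if_neg hJK, zero_cm, cm_zero]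
    have h' : cm (Q I) (acm (Q J) (cm (Q K) τ))
        + cm (Q I) (acm (Q K) (cm (Q J) τ)) = 0 := by
      have := congrArg (fun x => cm (Q I) x) h
      rw [hc] at this
      have hadd : ∀ (x y : A), cm (Q I) (x + y) = cm (Q I) x + cm (Q I) y := by
        intro x y; simp only [Paper.cm]; noncomm_ring
      rw [hadd] at this
      exact this.symm
    exact eq_neg_of_add_eq_zero_left h'
  intro I J K
  have e1 : cm (Q I) (acm (Q K) (cm (Q J) τ))
      = - cm (Q I) (acm (Q J) (cm (Q K) τ)) := by rw [hB I J K, neg_neg]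
  have e2 : cm (Q J) (acm (Q I) (cm (Q K) τ))
      = - cm (Q I) (acm (Q J) (cm (Q K) τ)) := by rw [hA I J K, neg_neg]
  have e3 : cm (Q J) (acm (Q K) (cm (Q I) τ))
      = cm (Q I) (acm (Q J) (cm (Q K) τ)) := by
    rw [hB J K I, hA I J K]
  have e4 : cm (Q K) (acm (Q I) (cm (Q J) τ))
      = cm (Q I) (acm (Q J) (cm (Q K) τ)) := by
    rw [hA K I J, hB I J K]
  have e5 : cm (Q K) (acm (Q J) (cm (Q I) τ))
      = - cm (Q I) (acm (Q J) (cm (Q K) τ)) := by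
    rw [hA K J I, hB J K I, hA J I K] <;> abel
  constructor
  · rw [cm_sub, cm_sub, e1, e2, e3] <;> abel
  · rw [cm_sub, cm_sub, e1, e4, e5] <;> abel
end

section
/- Let A be an associative superalgebra with data as above ({Q_I,Q_J}=2δ_{IJ}H, [H,Q_I]=0, [H,τ]=iℏ·1, ℏ≠0). Suppose additionally that the antisymmetric part τ''_{[IJ]} := ½({Q_I,[Q_J,τ]} − {Q_J,[Q_I,τ]}) vanishes for all I,J. Define θ^I := (1/(iℏ))·[Q_I,τ]. Then {Q_I, θ^J} = δ_I^J · 1 for all I,J. -/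
open Paper
/-- if moreover the antisymmetric second-order superpartners vanish,
i.e. `{Q_I,τ'_J}` is symmetric in `I,J`, then `θ^I := (1/(iℏ))·τ'_I` satisfies the
canonical relation `{Q_I,θ^J} = δ_I^J·1`. -/
theorem stmt5 {A : Type*} [Ring A] [Algebra ℂ A] {N : ℕ}
    (Q : Fin N → A) (H τ : A) (ℏ : ℂ) (hℏ : ℏ ≠ 0)
    (hQQ : ∀ I J, acm (Q I) (Q J) = if I = J then (2 : ℂ) • H else 0)
    (hHQ : ∀ I, cm H (Q I) = 0)
    (hHτ : cm H τ = (Complex.I * ℏ) • (1 : A))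
    (hsym : ∀ I J, acm (Q I) (cm (Q J) τ) = acm (Q J) (cm (Q I) τ)) :
    ∀ I J, acm (Q I) ((Complex.I * ℏ)⁻¹ • cm (Q J) τ)
      = if I = J then (1 : A) else 0 := by
  intro I J
  have hc : (Complex.I * ℏ) ≠ 0 := mul_ne_zero Complex.I_ne_zero hℏ
  have hsm : acm (Q I) ((Complex.I*ℏ)⁻¹ • cm (Q J) τ)
      = (Complex.I*ℏ)⁻¹ • acm (Q I) (cm (Q J) τ) := by
    simp [acm, mul_smul_comm, smul_mul_assoc, smul_add]
  have key : (2:ℂ) • acm (Q I) (cm (Q J) τ) = cm (acm (Q I) (Q J)) τ := by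
    have h2 : acm (Q I) (cm (Q J) τ) + acm (Q J) (cm (Q I) τ)
        = cm (acm (Q I) (Q J)) τ := by
      simp only [acm, cm]; noncomm_ring
    rw [← hsym I J] at h2
    rw [two_smul]; exact h2
  rw [hQQ] at key
  by_cases h : I = J
  · subst h
    simp only [if_pos rfl, if_true] at key ⊢
    have hcm : cm ((2:ℂ) • H) τ = (2:ℂ) • cm H τ := by
      simp [cm, smul_mul_assoc, mul_smul_comm, smul_sub]
    rw [hcm, hHτ] at key
    have hx : acm (Q I) (cm (Q I) τ) = (Complex.I * ℏ) • (1:A) := smul_right_injective A (two_ne_zero (α := ℂ)) key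
    rw [hsm, hx, smul_smul, inv_mul_cancel₀ hc, one_smul]
  · simp only [if_neg h] at key ⊢
    have hz : cm (0:A) τ = 0 := by simp [cm]
    rw [hz, smul_eq_zero] at key
    rcases key with k | k
    · exact absurd k (two_ne_zero (α := ℂ))
    · rw [hsm, k, smul_zero]
end

section
/- Let Q₁,…,Q_N be odd, H, τ even, with {Q_I,Q_J}=2δ_{IJ}H, [H,Q_I]=0, [H,τ]=iℏ·1. Set τ'_I := [Q_I,τ], η'_I := [τ,τ'_I], τ''_{[IJ]} := ½({Q_I,τ'_J}−{Q_J,τ'_I}). Then: (a) {τ'_I,τ'_J} = ½({Q_I,η'_J}+{Q_J,η'_I}); and (b) ½({Q_I,η'_J}−{Q_J,η'_I}) = [τ, τ''_{[IJ]}]. -/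
open Paper
/-- with `τ'_I := [Q_I,τ]`, `η'_I := [τ,τ'_I]`, and
`τ''_{[IJ]} := ½({Q_I,τ'_J} − {Q_J,τ'_I})`, one has
(a) `{τ'_I,τ'_J} = ½({Q_I,η'_J} + {Q_J,η'_I})`, and
(b) `½({Q_I,η'_J} − {Q_J,η'_I}) = [τ,τ''_{[IJ]}]`. -/
theorem stmt16 {A : Type*} [Ring A] [Algebra ℂ A] {N : ℕ}
    (Q : Fin N → A) (H τ : A) (ℏ : ℂ)
    (hQQ : ∀ I J, acm (Q I) (Q J) = if I = J then (2 : ℂ) • H else 0)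
    (hHQ : ∀ I, cm H (Q I) = 0)
    (hHτ : cm H τ = (Complex.I * ℏ) • (1 : A)) :
    (∀ I J, acm (cm (Q I) τ) (cm (Q J) τ)
        = ((2 : ℂ)⁻¹) • (acm (Q I) (cm τ (cm (Q J) τ))
                          + acm (Q J) (cm τ (cm (Q I) τ)))) ∧
    (∀ I J, ((2 : ℂ)⁻¹) • (acm (Q I) (cm τ (cm (Q J) τ))
                            - acm (Q J) (cm τ (cm (Q I) τ)))
        = cm τ (((2 : ℂ)⁻¹) • (acm (Q I) (cm (Q J) τ)
                                - acm (Q J) (cm (Q I) τ)))) := by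
  -- graded Jacobi identity (a pure ring identity):
  have jac : ∀ x q t : A, acm x (cm q t) = acm q (cm t x) - cm t (acm x q) := by
    intro x q t; simp only [cm, acm]; noncomm_ring
  have sum2 : ∀ a b t : A, acm a (cm b t) + acm b (cm a t) = cm (acm a b) t := by
    intro a b t; simp only [cm, acm]; noncomm_ring
  have acm_comm : ∀ x y : A, acm x y = acm y x := by
    intro x y; simp only [acm]; exact add_comm _ _
  have cm_smul : ∀ (c : ℂ) (x y : A), cm x (c • y) = c • cm x y := by
    intro c x y; simp only [cm, mul_smul_comm, smul_mul_assoc, smul_sub]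
  have smul_cm : ∀ (c : ℂ) (x y : A), cm (c • x) y = c • cm x y := by
    intro c x y; simp only [cm, mul_smul_comm, smul_mul_assoc, smul_sub]
  have cm_add : ∀ x y z : A, cm x (y + z) = cm x y + cm x z := by
    intro x y z; simp only [cm]; noncomm_ring
  have cm_sub : ∀ x y z : A, cm x (y - z) = cm x y - cm x z := by
    intro x y z; simp only [cm]; noncomm_ring
  -- the super-commutativity obstruction kills the symmetric part:
  have hS : ∀ I J, cm τ (acm (Q I) (cm (Q J) τ) + acm (Q J) (cm (Q I) τ)) = 0 := by
    intro I J
    rw [sum2, hQQ]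
    split_ifs
    · rw [smul_cm, hHτ, cm_smul]
      simp [cm]
    · simp [cm]
  -- the two Jacobi identities:
  have eq1 : ∀ I J, acm (cm (Q I) τ) (cm (Q J) τ)
      = acm (Q J) (cm τ (cm (Q I) τ)) - cm τ (acm (Q J) (cm (Q I) τ)) := by
    intro I J
    rw [jac (cm (Q I) τ) (Q J) τ, acm_comm (cm (Q I) τ) (Q J)]
  constructor
  · intro I J
    have key : acm (cm (Q I) τ) (cm (Q J) τ) + acm (cm (Q J) τ) (cm (Q I) τ)
        = acm (Q I) (cm τ (cm (Q J) τ)) + acm (Q J) (cm τ (cm (Q I) τ)) := by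
      rw [eq1 I J, eq1 J I]
      have h0 : cm τ (acm (Q J) (cm (Q I) τ)) + cm τ (acm (Q I) (cm (Q J) τ)) = 0 := by
        rw [← cm_add, add_comm, hS]
      calc acm (Q J) (cm τ (cm (Q I) τ)) - cm τ (acm (Q J) (cm (Q I) τ)) +
            (acm (Q I) (cm τ (cm (Q J) τ)) - cm τ (acm (Q I) (cm (Q J) τ)))
          = acm (Q I) (cm τ (cm (Q J) τ)) + acm (Q J) (cm τ (cm (Q I) τ)) -
            (cm τ (acm (Q J) (cm (Q I) τ)) + cm τ (acm (Q I) (cm (Q J) τ))) := by abel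
        _ = _ := by rw [h0, sub_zero]
    have h2 : (2 : ℂ) • acm (cm (Q I) τ) (cm (Q J) τ)
        = acm (Q I) (cm τ (cm (Q J) τ)) + acm (Q J) (cm τ (cm (Q I) τ)) := by
      rw [two_smul, ← key, acm_comm (cm (Q J) τ) (cm (Q I) τ)]
    rw [← h2, smul_smul]
    norm_num
  · intro I J
    have e := eq1 I J
    rw [acm_comm (cm (Q I) τ) (cm (Q J) τ), eq1 J I] at e
    -- e : X - cmτ(a) = Y - cmτ(b)  with X = QI η'_J term etc.
    rw [cm_smul, cm_sub]
    congr 1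
    rw [sub_eq_sub_iff_add_eq_add] at e ⊢
    rw [e]; abel
end
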